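/- arXiv:2106.00121 — 2 statements merged into one kernel-verified Lean document; each statement's English description precedes it below -/
import Mathlib

section
/- Let A be a Poisson process with unit rate and let T > 0. Then for every x with 0 ≤ x ≤ 4T, the probability that sup_{s ∈ [0,T]} |A(s) − s| ≥ x is at most 2·exp(−x²/(8T)). -/
/-!
For `c = ±1` and `l ≥ 0`, independence and the Poisson law of the increments make
`exp (l * c * (A t - t))` a submartingale along any finite grid `0 = t₀ ≤ ⋯ ≤ tₙ = T`. Doob's
maximal inequality, obtained by splitting at the first grid point where the threshold is crossed,
gives `P (max_k c * (A tₖ - tₖ) ≥ y) ≤ exp (T * (exp (c * l) - 1 - c * l) - l * y)`. Since `A` is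
monotone, `sup_{[0, T]} |A s - s|` exceeds its maximum over the uniform grid by at most the mesh
`T / n`, which tends to `0`. Finally `|exp u - 1 - u| ≤ u ^ 2` for `|u| ≤ 1`, and the choice
`l = x / (4 * T) ≤ 1` turns the exponent into `-3 * x ^ 2 / (16 * T) ≤ -x ^ 2 / (8 * T)`.
-/

open MeasureTheory ProbabilityTheory Real
open scoped NNReal ENNReal

theorem Fin.partialSum_eq_sum_castSucc_lt {M : Type*} [AddCommMonoid M] {n : ℕ} (f : Fin n → M)
    (k : Fin (n + 1)) : Fin.partialSum f k = ∑ i with i.castSucc < k, f i := by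
  induction k using Fin.induction with
  | zero => simp
  | succ k ih =>
    have hfilter : (Finset.univ.filter fun i : Fin n => i.castSucc < k.succ) =
        insert k (Finset.univ.filter fun i : Fin n => i.castSucc < k.castSucc) := by
      ext i
      simp [Fin.castSucc_lt_succ_iff, le_iff_lt_or_eq, or_comm]
    rw [Fin.partialSum_succ, ih, hfilter, Finset.sum_insert (by simp), add_comm]

theorem Fin.partialSum_succ_sub_castSucc {G : Type*} [AddCommGroup G] {n : ℕ}
    (f : Fin (n + 1) → G) (k : Fin (n + 1)) :
    Fin.partialSum (fun i => f i.succ - f i.castSucc) k = f k - f 0 := by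
  induction k using Fin.induction with
  | zero => simp
  | succ k ih => rw [Fin.partialSum_succ, ih]; abel

lemma abs_sub_le_max_add_of_monotoneOn {f : ℝ → ℝ} {a b s : ℝ}
    (hf : MonotoneOn f (Set.Icc a b)) (hs : s ∈ Set.Icc a b) :
    |f s - s| ≤ max |f a - a| |f b - b| + (b - a) := by
  have hab := hs.1.trans hs.2
  have hfa := hf (Set.left_mem_Icc.2 hab) hs hs.1
  have hfb := hf hs (Set.right_mem_Icc.2 hab) hs.2
  rw [abs_sub_le_iff]
  constructor <;> linarith [le_abs_self (f b - b), neg_abs_le (f a - a),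
    le_max_left |f a - a| |f b - b|, le_max_right |f a - a| |f b - b|, hs.1, hs.2]

lemma exists_abs_sub_le_of_monotoneOn {f : ℝ → ℝ} {T : ℝ} {n : ℕ} (hn : 0 < n)
    (hf : MonotoneOn f (Set.Icc 0 T)) {s : ℝ} (hs : s ∈ Set.Icc 0 T) :
    ∃ k : Fin (n + 1), |f s - s| ≤ |f ((k : ℕ) * (T / n)) - (k : ℕ) * (T / n)| + T / n := by
  classical
  have hh : 0 ≤ T / n := div_nonneg (hs.1.trans hs.2) n.cast_nonneg
  have hnh : (n : ℝ) * (T / n) = T := mul_div_cancel₀ T (by positivity)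
  have hlast : s ≤ ((n - 1 : ℕ) + 1) * (T / n) := by
    rw [Nat.cast_pred hn, sub_add_cancel, hnh]
    exact hs.2
  have hex : ∃ j : ℕ, s ≤ (j + 1) * (T / n) := ⟨n - 1, hlast⟩
  set j := Nat.find hex
  have hjn : j < n := (Nat.find_min' hex hlast).trans_lt (Nat.sub_lt hn one_pos)
  have hj_le : j * (T / n) ≤ s := by
    rcases Nat.eq_zero_or_eq_succ_pred j with hj | hj
    · rw [hj, Nat.cast_zero, zero_mul]
      exact hs.1
    · have := Nat.find_min hex (Nat.pred_lt (by omega : j ≠ 0))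
      rw [hj, Nat.cast_succ]
      exact (not_le.1 this).le
  have hsub : Set.Icc (j * (T / n)) ((j + 1) * (T / n)) ⊆ Set.Icc 0 T := by
    refine Set.Icc_subset_Icc (by positivity) ?_
    exact (mul_le_mul_of_nonneg_right (show (j : ℝ) + 1 ≤ n by exact_mod_cast hjn) hh).trans
      hnh.le
  have h := abs_sub_le_max_add_of_monotoneOn (hf.mono hsub) ⟨hj_le, Nat.find_spec hex⟩
  rw [show (j + 1) * (T / n) - j * (T / n) = T / n by ring] at h
  rcases max_choice |f (j * (T / n)) - j * (T / n)| |f ((j + 1) * (T / n)) - (j + 1) * (T / n)|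
    with hmax | hmax <;> rw [hmax] at h
  · exact ⟨⟨j, by omega⟩, h⟩
  · exact ⟨⟨j + 1, by omega⟩, by simpa using h⟩

lemma exists_le_abs_sub_of_le_iSup {f : ℝ → ℝ} {T x : ℝ} (hT : 0 ≤ T) {n : ℕ} (hn : 0 < n)
    (hf : MonotoneOn f (Set.Icc 0 T)) (hx : x ≤ ⨆ s : Set.Icc 0 T, |f s - s|) :
    ∃ k : Fin (n + 1), x - T / n ≤ |f ((k : ℕ) * (T / n)) - (k : ℕ) * (T / n)| := by
  obtain ⟨k, hk⟩ := Finite.exists_max fun k : Fin (n + 1) =>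
    |f ((k : ℕ) * (T / n)) - (k : ℕ) * (T / n)|
  have : Nonempty (Set.Icc 0 T) := Set.nonempty_Icc_subtype hT
  refine ⟨k, sub_le_iff_le_add.2 (hx.trans (ciSup_le fun s => ?_))⟩
  obtain ⟨j, hj⟩ := exists_abs_sub_le_of_monotoneOn hn hf s.2
  linarith [hk j]

namespace MeasureTheory

variable {Ω : Type*} {mΩ : MeasurableSpace Ω} {μ : Measure Ω}

lemma measure_iUnion_le_lintegral_of_disjointed {ι : Type*} [Countable ι] [LinearOrder ι]
    [LocallyFiniteOrderBot ι] {B : ι → Set Ω} (hB : ∀ k, MeasurableSet (B k)) {F : Ω → ℝ≥0∞}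
    (h : ∀ k, μ (disjointed B k) ≤ ∫⁻ ω in disjointed B k, F ω ∂μ) :
    μ (⋃ k, B k) ≤ ∫⁻ ω, F ω ∂μ := by
  have hmeas k : MeasurableSet (disjointed B k) := by
    rw [disjointed_eq_inter_compl]
    exact (hB k).inter (.iInter fun j => .iInter fun _ => (hB j).compl)
  calc μ (⋃ k, B k) = ∑' k, μ (disjointed B k) := by
        rw [← iUnion_disjointed, measure_iUnion (disjoint_disjointed B) hmeas]
    _ ≤ ∑' k, ∫⁻ ω in disjointed B k, F ω ∂μ := ENNReal.tsum_le_tsum h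
    _ = ∫⁻ ω in ⋃ k, disjointed B k, F ω ∂μ :=
        (lintegral_iUnion hmeas (disjoint_disjointed B) F).symm
    _ ≤ ∫⁻ ω, F ω ∂μ := setLIntegral_le_lintegral _ _

end MeasureTheory

namespace ProbabilityTheory

variable {Ω : Type*} {mΩ : MeasurableSpace Ω} {μ : Measure Ω}

lemma lintegral_le_lintegral_mul_of_indep {Mf Mg : MeasurableSpace Ω} {f g : Ω → ℝ≥0∞}
    (hMf : Mf ≤ mΩ) (hMg : Mg ≤ mΩ) (h_ind : Indep Mf Mg μ) (hf : Measurable[Mf] f)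
    (hg : Measurable[Mg] g) (hg_one : 1 ≤ ∫⁻ ω, g ω ∂μ) :
    ∫⁻ ω, f ω ∂μ ≤ ∫⁻ ω, f ω * g ω ∂μ := by
  rw [lintegral_mul_eq_lintegral_mul_lintegral_of_independent_measurableSpace hMf hMg h_ind hf hg]
  exact le_mul_of_one_le_right' hg_one

lemma measurable_partialSum_of_le {n : ℕ} {X : Fin n → Ω → ℝ} {j k : Fin (n + 1)} (hjk : j ≤ k) :
    Measurable[⨆ i ∈ {i : Fin n | i.castSucc < k}, (borel ℝ).comap (X i)]
      fun ω => Fin.partialSum (X · ω) j := by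
  simp only [Fin.partialSum_eq_sum_castSucc_lt]
  refine Finset.measurable_sum _ fun i hi => (comap_measurable (X i)).mono ?_ le_rfl
  exact le_biSup (fun i => (borel ℝ).comap (X i))
    (show i.castSucc < k from (Finset.mem_filter.1 hi).2.trans_le hjk)

lemma measurable_partialSum_last_sub {n : ℕ} {X : Fin n → Ω → ℝ} (k : Fin (n + 1)) :
    Measurable[⨆ i ∈ {i : Fin n | k ≤ i.castSucc}, (borel ℝ).comap (X i)]
      fun ω => Fin.partialSum (X · ω) (Fin.last n) - Fin.partialSum (X · ω) k := by
  have h ω : Fin.partialSum (X · ω) (Fin.last n) - Fin.partialSum (X · ω) k =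
      ∑ i with k ≤ i.castSucc, X i ω := by
    simp only [Fin.partialSum_eq_sum_castSucc_lt, Fin.castSucc_lt_last, Finset.filter_true]
    rw [← Finset.sum_filter_add_sum_filter_not Finset.univ (fun i : Fin n => i.castSucc < k)]
    simp [not_lt]
  simp only [h]
  refine Finset.measurable_sum _ fun i hi => (comap_measurable (X i)).mono ?_ le_rfl
  exact le_biSup (fun i => (borel ℝ).comap (X i))
    (show k ≤ i.castSucc from (Finset.mem_filter.1 hi).2)

theorem iIndepFun.measure_exists_le_partialSum_le {n : ℕ} {X : Fin n → Ω → ℝ}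
    (hX : iIndepFun X μ) (hX_meas : ∀ i, Measurable (X i)) {l : ℝ} (hl : 0 ≤ l)
    (h_tail : ∀ k, 1 ≤ ∫⁻ ω, ENNReal.ofReal (exp (l * (Fin.partialSum (X · ω) (Fin.last n) -
      Fin.partialSum (X · ω) k))) ∂μ) (y : ℝ) :
    μ {ω | ∃ k, y ≤ Fin.partialSum (X · ω) k} ≤
      ∫⁻ ω, ENNReal.ofReal (exp (l * (Fin.partialSum (X · ω) (Fin.last n) - y))) ∂μ := by
  set S : Fin (n + 1) → Ω → ℝ := fun k ω => Fin.partialSum (X · ω) k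
  have h_le {s : Set (Fin n)} : ⨆ i ∈ s, (borel ℝ).comap (X i) ≤ mΩ :=
    iSup₂_le fun i _ => (hX_meas i).comap_le
  have h_indep k : Indep (⨆ i ∈ {i : Fin n | i.castSucc < k}, (borel ℝ).comap (X i))
      (⨆ i ∈ {i : Fin n | k ≤ i.castSucc}, (borel ℝ).comap (X i)) μ :=
    indep_iSup_of_disjoint (fun i => (hX_meas i).comap_le) ((iIndepFun_iff_iIndep _ _ _).1 hX)
      (Set.disjoint_left.2 fun i (h₁ : i.castSucc < k) (h₂ : k ≤ i.castSucc) => not_lt.2 h₂ h₁)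
  set B : Fin (n + 1) → Set Ω := fun k => {ω | y ≤ S k ω} with hB
  have hB_past {j k : Fin (n + 1)} (hjk : j ≤ k) :
      MeasurableSet[⨆ i ∈ {i : Fin n | i.castSucc < k}, (borel ℝ).comap (X i)] (B j) :=
    measurableSet_le measurable_const (measurable_partialSum_of_le hjk)
  have hD_past k :
      MeasurableSet[⨆ i ∈ {i : Fin n | i.castSucc < k}, (borel ℝ).comap (X i)]
        (disjointed B k) := by
    rw [disjointed_eq_inter_compl]
    exact (hB_past le_rfl).inter (.iInter fun j => .iInter fun hj => (hB_past hj.le).compl)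
  have hunion : {ω | ∃ k, y ≤ S k ω} = ⋃ k, B k := by ext; simp [hB]
  rw [hunion]
  refine measure_iUnion_le_lintegral_of_disjointed (fun k => h_le _ (hB_past le_rfl)) fun k => ?_
  have hD := h_le _ (hD_past k)
  have hZ := ENNReal.measurable_ofReal.comp (measurable_exp.comp
    (((measurable_partialSum_of_le (X := X) (le_refl k)).sub_const y).const_mul l))
  have hW := ENNReal.measurable_ofReal.comp
    (measurable_exp.comp ((measurable_partialSum_last_sub (X := X) k).const_mul l))
  calc μ (disjointed B k) = ∫⁻ _ in disjointed B k, 1 ∂μ := (setLIntegral_one _).symm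
    _ ≤ ∫⁻ ω in disjointed B k, ENNReal.ofReal (exp (l * (S k ω - y))) ∂μ :=
        setLIntegral_mono' hD fun ω hω => ENNReal.one_le_ofReal.2
          (one_le_exp (mul_nonneg hl (sub_nonneg.2 (disjointed_subset B k hω))))
    _ = ∫⁻ ω, (disjointed B k).indicator (fun ω => ENNReal.ofReal (exp (l * (S k ω - y)))) ω ∂μ :=
        (lintegral_indicator hD _).symm
    _ ≤ ∫⁻ ω, (disjointed B k).indicator (fun ω => ENNReal.ofReal (exp (l * (S k ω - y)))) ω *
          ENNReal.ofReal (exp (l * (S (Fin.last n) ω - S k ω))) ∂μ :=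
        lintegral_le_lintegral_mul_of_indep h_le h_le (h_indep k) (hZ.indicator (hD_past k)) hW
          (h_tail k)
    _ = ∫⁻ ω in disjointed B k, ENNReal.ofReal (exp (l * (S (Fin.last n) ω - y))) ∂μ := by
        rw [← lintegral_indicator hD]
        refine lintegral_congr fun ω => ?_
        by_cases hω : ω ∈ disjointed B k
        · simp only [Set.indicator_of_mem hω, ← ENNReal.ofReal_mul (exp_nonneg _), ← exp_add]
          ring_nf
        · simp [Set.indicator_of_notMem hω]

lemma lintegral_exp_poissonMeasure (r : ℝ≥0) (a b : ℝ) :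
    ∫⁻ n, ENNReal.ofReal (exp (a * n + b)) ∂poissonMeasure r =
      ENNReal.ofReal (exp (r * (exp a - 1) + b)) := by
  have hsum : HasSum (fun n : ℕ => exp (a * n + b) * (exp (-r) * r ^ n / n.factorial))
      (exp (r * (exp a - 1) + b)) := by
    have h := (NormedSpace.expSeries_div_hasSum_exp ((r : ℝ) * exp a)).mul_left (exp (b - r))
    rw [← Real.exp_eq_exp_ℝ] at h
    have hterm : ∀ n : ℕ, exp (a * n + b) * (exp (-r) * r ^ n / n.factorial) =
        exp (b - r) * ((r * exp a) ^ n / n.factorial) := fun n => by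
      rw [mul_pow, ← exp_nat_mul, mul_comm (n : ℝ) a, exp_add, exp_sub, exp_neg]
      ring
    rwa [funext hterm, show r * (exp a - 1) + b = b - r + r * exp a by ring, exp_add]
  rw [lintegral_countable']
  simp_rw [poissonMeasure_singleton, ← ENNReal.ofReal_mul (exp_nonneg _)]
  rw [← ENNReal.ofReal_tsum_of_nonneg (fun n => by positivity) hsum.summable, hsum.tsum_eq]

lemma lintegral_exp_of_map_eq_poissonMeasure {N : Ω → ℕ} (hN : Measurable N) {r : ℝ≥0}
    (hlaw : μ.map N = poissonMeasure r) (a b : ℝ) :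
    ∫⁻ ω, ENNReal.ofReal (exp (a * N ω + b)) ∂μ = ENNReal.ofReal (exp (r * (exp a - 1) + b)) := by
  rw [← lintegral_exp_poissonMeasure, ← hlaw, lintegral_map (measurable_of_countable _) hN]

structure IsUnitRatePoissonProcess (A : ℝ → Ω → ℕ) (μ : Measure Ω) : Prop where
  measurable : ∀ t, Measurable (A t)
  zero : ∀ ω, A 0 ω = 0
  monotoneOn : ∀ ω, MonotoneOn (fun s => A s ω) (Set.Ici 0)
  map_sub : ∀ s t : ℝ, 0 ≤ s → s ≤ t →
    μ.map (fun ω => A t ω - A s ω) = poissonMeasure (t - s).toNNReal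
  iIndepFun_sub : ∀ (n : ℕ) (t : Fin (n + 1) → ℝ), (∀ i, 0 ≤ t i) → Monotone t →
    iIndepFun (fun (i : Fin n) ω => A (t i.succ) ω - A (t i.castSucc) ω) μ

namespace IsUnitRatePoissonProcess

variable {A : ℝ → Ω → ℕ}

theorem cast_sub (hA : IsUnitRatePoissonProcess A μ) {s t : ℝ} (hs : 0 ≤ s) (hst : s ≤ t)
    (ω : Ω) : ((A t ω - A s ω : ℕ) : ℝ) = A t ω - A s ω :=
  Nat.cast_sub (hA.monotoneOn ω hs (hs.trans hst) hst)

theorem lintegral_exp_increment (hA : IsUnitRatePoissonProcess A μ) {s t : ℝ} (hs : 0 ≤ s)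
    (hst : s ≤ t) (a b : ℝ) :
    ∫⁻ ω, ENNReal.ofReal (exp (a * ((A t ω : ℝ) - A s ω - (t - s)) + b)) ∂μ =
      ENNReal.ofReal (exp ((t - s) * (exp a - 1 - a) + b)) := by
  have h_exponent ω : a * ((A t ω : ℝ) - A s ω - (t - s)) + b =
      a * ((A t ω - A s ω : ℕ) : ℝ) + (b - a * (t - s)) := by
    rw [hA.cast_sub hs hst]
    ring
  simp_rw [h_exponent]
  rw [lintegral_exp_of_map_eq_poissonMeasure (N := fun ω => A t ω - A s ω)
      ((hA.measurable t).sub (hA.measurable s)) (hA.map_sub s t hs hst),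
    Real.coe_toNNReal _ (sub_nonneg.2 hst)]
  ring_nf

theorem partialSum_increments (hA : IsUnitRatePoissonProcess A μ) {n : ℕ}
    {t : Fin (n + 1) → ℝ} (ht₀ : t 0 = 0) (ht : Monotone t) (c : ℝ) (ω : Ω) (k : Fin (n + 1)) :
    Fin.partialSum (fun i => c * (((A (t i.succ) ω - A (t i.castSucc) ω : ℕ) : ℝ) -
      (t i.succ - t i.castSucc))) k = c * ((A (t k) ω : ℝ) - t k) := by
  have ht_nonneg k : 0 ≤ t k := ht₀ ▸ ht (Fin.zero_le k)
  have h_increment (i : Fin n) : c * (((A (t i.succ) ω - A (t i.castSucc) ω : ℕ) : ℝ) -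
      (t i.succ - t i.castSucc)) =
        c * ((A (t i.succ) ω : ℝ) - t i.succ) - c * ((A (t i.castSucc) ω : ℝ) - t i.castSucc) := by
    rw [hA.cast_sub (ht_nonneg _) (ht (Fin.castSucc_le_succ i))]
    ring
  rw [funext h_increment, Fin.partialSum_succ_sub_castSucc (fun k => c * ((A (t k) ω : ℝ) - t k))]
  simp [ht₀, hA.zero]

theorem measure_exists_le_mul_sub_le (hA : IsUnitRatePoissonProcess A μ) {n : ℕ}
    {t : Fin (n + 1) → ℝ} (ht₀ : t 0 = 0) (ht : Monotone t) (c : ℝ) {l : ℝ} (hl : 0 ≤ l)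
    (y : ℝ) :
    μ {ω | ∃ k, y ≤ c * ((A (t k) ω : ℝ) - t k)} ≤
      ENNReal.ofReal (exp (t (Fin.last n) * (exp (c * l) - 1 - c * l) - l * y)) := by
  have ht_nonneg k : 0 ≤ t k := ht₀ ▸ ht (Fin.zero_le k)
  set B : Fin (n + 1) → Ω → ℝ := fun k ω => c * ((A (t k) ω : ℝ) - t k) with hB
  set X : Fin n → Ω → ℝ := fun i ω =>
    c * (((A (t i.succ) ω - A (t i.castSucc) ω : ℕ) : ℝ) - (t i.succ - t i.castSucc))
  have hX_indep : iIndepFun X μ :=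
    (hA.iIndepFun_sub n t ht_nonneg ht).comp
      (fun i (m : ℕ) => c * ((m : ℝ) - (t i.succ - t i.castSucc)))
      fun _ => measurable_of_countable _
  have hX_meas i : Measurable (X i) :=
    (measurable_of_countable (fun m : ℕ => c * ((m : ℝ) - (t i.succ - t i.castSucc)))).comp
      ((hA.measurable _).sub (hA.measurable _))
  have hS ω k : Fin.partialSum (X · ω) k = B k ω := hA.partialSum_increments ht₀ ht c ω k
  have hmgf k (b : ℝ) : ∫⁻ ω, ENNReal.ofReal (exp (l * (B (Fin.last n) ω - B k ω) + b)) ∂μ =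
      ENNReal.ofReal (exp ((t (Fin.last n) - t k) * (exp (c * l) - 1 - c * l) + b)) := by
    have h_exponent ω : l * (B (Fin.last n) ω - B k ω) =
        c * l * ((A (t (Fin.last n)) ω : ℝ) - A (t k) ω - (t (Fin.last n) - t k)) := by
      simp only [hB]
      ring
    simp_rw [h_exponent]
    exact hA.lintegral_exp_increment (ht_nonneg k) (ht (Fin.le_last k)) _ _
  have h_tail k : 1 ≤ ∫⁻ ω, ENNReal.ofReal (exp (l * (B (Fin.last n) ω - B k ω))) ∂μ := by
    have h := hmgf k 0
    simp only [add_zero] at h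
    rw [h, ENNReal.one_le_ofReal]
    exact one_le_exp (mul_nonneg (sub_nonneg.2 (ht (Fin.le_last k)))
      (by linarith [add_one_le_exp (c * l)]))
  have key := hX_indep.measure_exists_le_partialSum_le hX_meas hl
    (by simpa only [hS] using h_tail) y
  simp only [hS] at key
  have hB₀ ω : B 0 ω = 0 := by simp [hB, ht₀, hA.zero]
  calc _ ≤ _ := key
    _ = ∫⁻ ω, ENNReal.ofReal (exp (l * (B (Fin.last n) ω - B 0 ω) + -(l * y))) ∂μ := by
        simp only [hB₀, sub_zero, ← sub_eq_add_neg, mul_sub]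
    _ = _ := by rw [hmgf, ht₀, sub_zero, ← sub_eq_add_neg]

theorem measure_le_iSup_abs_sub_le_of_grid (hA : IsUnitRatePoissonProcess A μ) {T : ℝ}
    (hT : 0 ≤ T) {l : ℝ} (hl₀ : 0 ≤ l) (hl₁ : l ≤ 1) (x : ℝ) {n : ℕ} (hn : 0 < n) :
    μ {ω | x ≤ ⨆ s : Set.Icc (0 : ℝ) T, |(A s ω : ℝ) - s|} ≤
      ENNReal.ofReal (2 * exp (T * l ^ 2 - l * (x - T / n))) := by
  set t : Fin (n + 1) → ℝ := fun k => (k : ℕ) * (T / n) with ht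
  have ht_mono : Monotone t := fun i j hij =>
    mul_le_mul_of_nonneg_right (by exact_mod_cast hij) (by positivity)
  have ht_last : t (Fin.last n) = T := by
    simp only [ht, Fin.val_last]
    field_simp
  have h_tail (c : ℝ) (hc : |c| = 1) : μ {ω | ∃ k, x - T / n ≤ c * ((A (t k) ω : ℝ) - t k)} ≤
      ENNReal.ofReal (exp (T * l ^ 2 - l * (x - T / n))) := by
    refine (hA.measure_exists_le_mul_sub_le (by simp [ht]) ht_mono c hl₀ _).trans
      (ENNReal.ofReal_le_ofReal (exp_le_exp.2 ?_))
    have hcl : |c * l| ≤ 1 := by rwa [abs_mul, hc, one_mul, abs_of_nonneg hl₀]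
    have hsq : (c * l) ^ 2 = l ^ 2 := by rw [mul_pow, ← sq_abs c, hc, one_pow, one_mul]
    rw [ht_last, ← hsq]
    gcongr
    exact (le_abs_self _).trans (abs_exp_sub_one_sub_id_le hcl)
  have hsub : {ω | x ≤ ⨆ s : Set.Icc (0 : ℝ) T, |(A s ω : ℝ) - s|} ⊆
      {ω | ∃ k, x - T / n ≤ 1 * ((A (t k) ω : ℝ) - t k)} ∪
        {ω | ∃ k, x - T / n ≤ -1 * ((A (t k) ω : ℝ) - t k)} := by
    intro ω hω
    have hmono : MonotoneOn (fun s => (A s ω : ℝ)) (Set.Icc 0 T) :=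
      Nat.mono_cast.comp_monotoneOn ((hA.monotoneOn ω).mono Set.Icc_subset_Ici_self)
    obtain ⟨k, hk⟩ := exists_le_abs_sub_of_le_iSup hT hn hmono hω
    rcases le_abs.1 hk with hk | hk
    · exact Or.inl ⟨k, by simpa using hk⟩
    · exact Or.inr ⟨k, by simpa using hk⟩
  calc _ ≤ _ := measure_mono hsub
    _ ≤ _ := measure_union_le _ _
    _ ≤ _ := add_le_add (h_tail 1 abs_one) (h_tail (-1) (by simp))
    _ = _ := by rw [← ENNReal.ofReal_add (by positivity) (by positivity), ← two_mul]

theorem measure_le_iSup_abs_sub_le (hA : IsUnitRatePoissonProcess A μ) {T : ℝ} (hT : 0 ≤ T)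
    {l : ℝ} (hl₀ : 0 ≤ l) (hl₁ : l ≤ 1) (x : ℝ) :
    μ {ω | x ≤ ⨆ s : Set.Icc (0 : ℝ) T, |(A s ω : ℝ) - s|} ≤
      ENNReal.ofReal (2 * exp (T * l ^ 2 - l * x)) := by
  set g : ℝ → ℝ≥0∞ := fun ε => ENNReal.ofReal (2 * exp (T * l ^ 2 - l * (x - ε))) with hg
  have hg_cont : Continuous g := ENNReal.continuous_ofReal.comp (by fun_prop)
  have hlim := (hg_cont.tendsto 0).comp (tendsto_const_div_atTop_nhds_zero_nat T)
  simpa [hg] using ge_of_tendsto hlim (Filter.eventually_atTop.2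
    ⟨1, fun n hn => hA.measure_le_iSup_abs_sub_le_of_grid hT hl₀ hl₁ x hn⟩)

end IsUnitRatePoissonProcess

end ProbabilityTheory

theorem poisson_process_sup_bound_general {Ω : Type*} [MeasurableSpace Ω] (P : Measure Ω)
    (A : ℝ → Ω → ℕ)
    (hmeas : ∀ t, Measurable (A t))
    (h0 : ∀ ω, A 0 ω = 0)
    (hmono : ∀ ω, MonotoneOn (fun s => A s ω) (Set.Ici (0 : ℝ)))
    (hlaw : ∀ s t : ℝ, 0 ≤ s → s ≤ t →
      Measure.map (fun ω => A t ω - A s ω) P = poissonMeasure (t - s).toNNReal)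
    (hindep : ∀ (n : ℕ) (t : Fin (n + 1) → ℝ), (∀ i, 0 ≤ t i) → Monotone t →
      iIndepFun
        (fun (i : Fin n) (ω : Ω) => A (t i.succ) ω - A (t i.castSucc) ω) P)
    (T x : ℝ) (hT : 0 < T) (hx0 : 0 ≤ x) (hx : x ≤ 4 * T) :
    P {ω | x ≤ ⨆ s : Set.Icc (0 : ℝ) T, |(A (s : ℝ) ω : ℝ) - (s : ℝ)|} ≤
      ENNReal.ofReal (2 * Real.exp (-x ^ 2 / (8 * T))) := by
  have hA : IsUnitRatePoissonProcess A P := ⟨hmeas, h0, hmono, hlaw, hindep⟩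
  refine (hA.measure_le_iSup_abs_sub_le hT.le (l := x / (4 * T)) (by positivity)
    ((div_le_one (by positivity)).2 hx) x).trans (ENNReal.ofReal_le_ofReal ?_)
  have h_exponent : T * (x / (4 * T)) ^ 2 - x / (4 * T) * x =
      -x ^ 2 / (8 * T) - x ^ 2 / (16 * T) := by
    field_simp
    ring
  rw [h_exponent]
  gcongr
  linarith [show 0 ≤ x ^ 2 / (16 * T) by positivity]

/-- Supremum bound for a compensated unit-rate Poisson process: if `A` is a
Poisson counting process of rate 1 (starting from 0, with monotone paths,
independent increments, and `A(t) − A(s)` Poisson distributed with parameter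
`t − s`), then for `T > 0` and `0 ≤ x ≤ 4T`,
`P(sup_{s ∈ [0,T]} |A(s) − s| ≥ x) ≤ 2 exp(−x²/(8T))`. -/
theorem poisson_process_sup_bound {Ω : Type*} [MeasurableSpace Ω] (P : Measure Ω)
    [IsProbabilityMeasure P] (A : ℝ → Ω → ℕ)
    (hmeas : ∀ t, Measurable (A t))
    (h0 : ∀ ω, A 0 ω = 0)
    (hmono : ∀ ω, MonotoneOn (fun s => A s ω) (Set.Ici (0 : ℝ)))
    (hlaw : ∀ s t : ℝ, 0 ≤ s → s ≤ t →
      Measure.map (fun ω => A t ω - A s ω) P = poissonMeasure (t - s).toNNReal)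
    (hindep : ∀ (n : ℕ) (t : Fin (n + 1) → ℝ), (∀ i, 0 ≤ t i) → Monotone t →
      iIndepFun
        (fun (i : Fin n) (ω : Ω) => A (t i.succ) ω - A (t i.castSucc) ω) P)
    (T x : ℝ) (hT : 0 < T) (hx0 : 0 ≤ x) (hx : x ≤ 4 * T) :
    P {ω | x ≤ ⨆ s : Set.Icc (0 : ℝ) T, |(A (s : ℝ) ω : ℝ) - (s : ℝ)|} ≤
      ENNReal.ofReal (2 * Real.exp (-x ^ 2 / (8 * T))) :=
  poisson_process_sup_bound_general P A hmeas h0 hmono hlaw hindep T x hT hx0 hx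
end

section
/- Let {Φ_i : i ≥ 1} be independent nonnegative random variables adapted to a filtration {F_i}, and suppose there are constants c, c₁ > 0 and θ ∈ (0,1) such that P(Φ_i ≥ x | F_{i−1}) ≤ c·exp(−c₁ x^θ) for all x ≥ 0 and i ≥ 1. Set μ := ∫₀^∞ c·exp(−c₁ x^θ) dx. Then there exist constants c₂, c₃ > 0 (depending only on c, c₁, θ) such that for every a ≥ 4μ and every n ≥ 1, P(Σ_{i=1}^n Φ_i ≥ a·n) ≤ c₂·(1 + n^{1/(2+θ)} / a^{θ/(2+θ)})·exp(−c₃·(a²n)^{θ/(2+θ)}). -/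
/-!
Taking expectations turns the conditional tail bound into `P(Φᵢ ≥ x) ≤ c·exp(-c₁ x^θ)`.
Truncate every summand at `M = (a²n)^(1/(2+θ))`. The sum can only reach `an` if some `Φᵢ ≥ M`,
which has probability at most `n·c·exp(-c₁ T)` with `T = M^θ = (a²n)^(θ/(2+θ))`, or if the sum of
the truncations `min Φᵢ M` reaches `an`. By the layer-cake formula each truncation has mean at
most `μ ≤ a/4`, and since it lies in `[0, M]` its moment generating function at `log 2 / M` is at
most `exp(μ/M)` by convexity; the Chernoff bound for the independent truncations then gives
`exp(-(log 2 - 1/4) a n / M) ≤ exp(-(log 2 - 1/4) T)` when `a ≤ M` (for `a > M` that event is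
empty). Finally `n · exp(-c₁ T / 2)` is bounded uniformly since `T ≥ (16μ²n)^(θ/(2+θ))`.
-/

open MeasureTheory ProbabilityTheory Real Finset
open scoped Nat

theorem exp_mul_le_one_add_div_mul {M x : ℝ} (hM : 0 < M) (hx0 : 0 ≤ x) (hxM : x ≤ M) (l : ℝ) :
    exp (l * x) ≤ 1 + x / M * (exp (l * M) - 1) := by
  have hxM' : x / M ≤ 1 := (div_le_one hM).2 hxM
  have h := convexOn_exp.2 (Set.mem_univ 0) (Set.mem_univ (l * M)) (sub_nonneg.2 hxM')
    (div_nonneg hx0 hM.le) (sub_add_cancel 1 (x / M))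
  have hlx : x / M * (l * M) = l * x := by field_simp
  simp only [smul_eq_mul, mul_zero, zero_add, exp_zero, hlx] at h
  linarith

theorem exists_le_mul_exp_mul_rpow {b r : ℝ} (hb : 0 < b) (hr : 0 < r) :
    ∃ K > 0, ∀ x : ℝ, 1 ≤ x → x ≤ K * exp (b * x ^ r) := by
  obtain ⟨k, hk⟩ := exists_nat_ge (1 / r)
  refine ⟨k ! / b ^ k, by positivity, fun x hx => ?_⟩
  have hx0 : 0 ≤ x := zero_le_one.trans hx
  have hrk : 1 ≤ r * k := by rwa [div_le_iff₀ hr, mul_comm] at hk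
  have hexp := pow_div_factorial_le_exp _ (mul_nonneg hb.le (rpow_nonneg hx0 r)) k
  rw [div_le_iff₀ (by positivity)] at hexp
  calc x = x ^ (1 : ℝ) := (rpow_one x).symm
    _ ≤ x ^ (r * k) := rpow_le_rpow_of_exponent_le hx hrk
    _ = (b * x ^ r) ^ k / b ^ k := by
        rw [mul_pow, rpow_mul hx0, rpow_natCast]; field_simp
    _ ≤ k ! / b ^ k * exp (b * x ^ r) := by
        rw [div_mul_eq_mul_div, mul_comm (k ! : ℝ)]; gcongr

theorem mul_mul_exp_add_exp_le {n T K c c₁ κ : ℝ} (hc : 0 ≤ c) (hK : 0 ≤ K) (hT : 0 ≤ T)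
    (hn : n ≤ K * exp (c₁ / 2 * T)) :
    n * (c * exp (-c₁ * T)) + exp (-κ * T) ≤ (1 + c * K) * exp (-min κ (c₁ / 2) * T) := by
  have hsplit : exp (c₁ / 2 * T) * exp (-c₁ * T) = exp (-(c₁ / 2) * T) := by
    rw [← exp_add]; ring_nf
  calc n * (c * exp (-c₁ * T)) + exp (-κ * T)
      ≤ K * exp (c₁ / 2 * T) * (c * exp (-c₁ * T)) + exp (-κ * T) := by gcongr
    _ = c * K * exp (-(c₁ / 2) * T) + exp (-κ * T) := by rw [← hsplit]; ring
    _ ≤ c * K * exp (-min κ (c₁ / 2) * T) + exp (-min κ (c₁ / 2) * T) := by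
        gcongr
        · exact min_le_right _ _
        · exact min_le_left _ _
    _ = (1 + c * K) * exp (-min κ (c₁ / 2) * T) := by ring

theorem integrableOn_const_mul_exp_neg_mul_rpow (c : ℝ) {b p : ℝ} (hb : 0 < b) (hp : 0 < p) :
    IntegrableOn (fun x : ℝ => c * exp (-b * x ^ p)) (Set.Ioi 0) := by
  have := (integrableOn_rpow_mul_exp_neg_mul_rpow neg_one_lt_zero hp hb).const_mul c
  simp only [rpow_zero, one_mul] at this
  exact this

theorem integral_const_mul_exp_neg_mul_rpow_pos {c b p : ℝ} (hc : 0 < c) (hb : 0 < b)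
    (hp : 0 < p) : 0 < ∫ x in Set.Ioi (0 : ℝ), c * exp (-b * x ^ p) := by
  have := Gamma_pos_of_pos (by positivity : 0 < 1 / p + 1)
  rw [integral_const_mul, integral_exp_neg_mul_rpow hp hb]
  positivity

theorem div_rpow_one_div_two_add_sq {A θ : ℝ} (hA : 0 < A) (hθ : 2 + θ ≠ 0) :
    A / (A ^ (1 / (2 + θ))) ^ 2 = A ^ (θ / (2 + θ)) := by
  rw [div_eq_iff (by positivity), ← rpow_natCast _ 2, ← rpow_mul hA.le, ← rpow_add hA,
    show θ / (2 + θ) + 1 / (2 + θ) * (2 : ℕ) = 1 by field_simp; ring, rpow_one]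

section Probability

variable {Ω : Type*} {m₀ : MeasurableSpace Ω} {P : Measure Ω}

theorem measureReal_le_of_condExp_indicator_le [IsProbabilityMeasure P] {m : MeasurableSpace Ω}
    (hm : m ≤ m₀) {s : Set Ω}
    (hs : MeasurableSet[m₀] s) {b : ℝ}
    (h : ∀ᵐ ω ∂P, P[s.indicator (fun _ => (1 : ℝ)) | m] ω ≤ b) : P.real s ≤ b :=
  calc P.real s = ∫ ω, s.indicator (fun _ => (1 : ℝ)) ω ∂P := by
        rw [integral_indicator_const _ hs, smul_eq_mul, mul_one]
    _ = ∫ ω, P[s.indicator (fun _ => (1 : ℝ)) | m] ω ∂P := (integral_condExp hm).symm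
    _ ≤ ∫ _, b ∂P := integral_mono_ae integrable_condExp (integrable_const b) h
    _ = b := by simp

theorem integral_le_of_measureReal_gt_le {X : Ω → ℝ} (hX : Integrable X P) (hX0 : 0 ≤ X)
    {g : ℝ → ℝ} (hg : IntegrableOn g (Set.Ioi 0))
    (h : ∀ t > 0, P.real {ω | t < X ω} ≤ g t) :
    ∫ ω, X ω ∂P ≤ ∫ t in Set.Ioi 0, g t := by
  rw [hX.integral_eq_integral_meas_lt (.of_forall hX0)]
  exact integral_mono_of_nonneg (.of_forall fun _ => measureReal_nonneg) hg
    ((ae_restrict_iff' measurableSet_Ioi).2 (.of_forall h))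

theorem mgf_le_exp_integral_div_mul [IsProbabilityMeasure P] {X : Ω → ℝ} (hX : Measurable X)
    {M : ℝ} (hM : 0 < M) (hX0 : ∀ ω, 0 ≤ X ω) (hXM : ∀ ω, X ω ≤ M) (l : ℝ) :
    mgf X P l ≤ exp ((∫ ω, X ω ∂P) / M * (exp (l * M) - 1)) := by
  have hXIcc : ∀ᵐ ω ∂P, X ω ∈ Set.Icc 0 M := .of_forall fun ω => ⟨hX0 ω, hXM ω⟩
  have hXint : Integrable X P := .of_mem_Icc 0 M hX.aemeasurable hXIcc
  calc mgf X P l ≤ ∫ ω, (1 + X ω / M * (exp (l * M) - 1)) ∂P :=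
        integral_mono (integrable_exp_mul_of_mem_Icc hX.aemeasurable hXIcc)
          ((integrable_const 1).add ((hXint.div_const M).mul_const _))
          fun ω => exp_mul_le_one_add_div_mul hM (hX0 ω) (hXM ω) l
    _ = 1 + (∫ ω, X ω ∂P) / M * (exp (l * M) - 1) := by
        rw [integral_add (integrable_const 1) ((hXint.div_const M).mul_const _), integral_const,
          integral_mul_const, integral_div]
        simp
    _ ≤ exp ((∫ ω, X ω ∂P) / M * (exp (l * M) - 1)) := by
        linarith [add_one_le_exp ((∫ ω, X ω ∂P) / M * (exp (l * M) - 1))]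

theorem measureReal_sum_ge_le_exp [IsProbabilityMeasure P] {ι : Type*} {X : ι → Ω → ℝ}
    (hX : ∀ i, Measurable (X i)) (hind : iIndepFun X P) {M m : ℝ} (hM : 0 < M)
    (hX0 : ∀ i ω, 0 ≤ X i ω) (hXM : ∀ i ω, X i ω ≤ M) {s : Finset ι}
    (hm : ∀ i ∈ s, ∫ ω, X i ω ∂P ≤ m) (t : ℝ) {l : ℝ} (hl : 0 ≤ l) :
    P.real {ω | t ≤ ∑ i ∈ s, X i ω} ≤ exp (-l * t + #s * (m / M * (exp (l * M) - 1))) := by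
  have hlM : 0 ≤ exp (l * M) - 1 := sub_nonneg.2 (one_le_exp (mul_nonneg hl hM.le))
  have hmgf : ∀ i ∈ s, mgf (X i) P l ≤ exp (m / M * (exp (l * M) - 1)) := fun i hi =>
    (mgf_le_exp_integral_div_mul (hX i) hM (hX0 i) (hXM i) l).trans
      (exp_le_exp.2 (by gcongr; exact hm i hi))
  have hint : ∀ i ∈ s, Integrable (fun ω => exp (l * X i ω)) P := fun i _ =>
    integrable_exp_mul_of_le l M hl (hX i).aemeasurable (.of_forall (hXM i))
  calc P.real {ω | t ≤ ∑ i ∈ s, X i ω}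
      = P.real {ω | t ≤ (∑ i ∈ s, X i) ω} := by simp only [Finset.sum_apply]
    _ ≤ exp (-l * t) * mgf (∑ i ∈ s, X i) P l :=
        measure_ge_le_exp_mul_mgf t hl (hind.integrable_exp_mul_sum hX hint)
    _ ≤ exp (-l * t) * ∏ _i ∈ s, exp (m / M * (exp (l * M) - 1)) := by
        rw [hind.mgf_sum hX]
        gcongr with i hi
        · exact fun i _ => mgf_nonneg
        · exact hmgf i hi
    _ = exp (-l * t + #s * (m / M * (exp (l * M) - 1))) := by
        rw [prod_const, ← exp_nat_mul, ← exp_add]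

theorem measureReal_sum_ge_le_exp_neg_sq [IsProbabilityMeasure P] {ι : Type*} {X : ι → Ω → ℝ}
    (hX : ∀ i, Measurable (X i)) (hind : iIndepFun X P) {M a : ℝ} (hM : 0 < M) (ha : 0 ≤ a)
    (hX0 : ∀ i ω, 0 ≤ X i ω) (hXM : ∀ i ω, X i ω ≤ M) {s : Finset ι}
    (hmean : ∀ i ∈ s, ∫ ω, X i ω ∂P ≤ a / 4) :
    P.real {ω | a * #s ≤ ∑ i ∈ s, X i ω} ≤ exp (-(log 2 - 1 / 4) * (a ^ 2 * #s / M ^ 2)) := by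
  have hκ : 0 < log 2 - 1 / 4 := by linarith [log_two_gt_d9]
  rcases le_or_gt a M with haM | hMa
  · -- Chernoff with `l = log 2 / M`, for which `exp (l * M) - 1 = 1`
    refine (measureReal_sum_ge_le_exp hX hind hM hX0 hXM hmean _
      (div_nonneg (log_nonneg one_le_two) hM.le)).trans (exp_le_exp.2 ?_)
    rw [div_mul_cancel₀ _ hM.ne', exp_log two_pos]
    have hsq : a ^ 2 * #s / M ^ 2 ≤ a * #s / M := by
      rw [div_le_div_iff₀ (by positivity) hM, pow_two, pow_two]
      have : 0 ≤ a * #s * M := by positivity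
      nlinarith
    calc -(log 2 / M) * (a * #s) + #s * (a / 4 / M * (2 - 1))
        = -(log 2 - 1 / 4) * (a * #s / M) := by field_simp; ring
      _ ≤ -(log 2 - 1 / 4) * (a ^ 2 * #s / M ^ 2) := mul_le_mul_of_nonpos_left hsq (by linarith)
  · rcases s.eq_empty_or_nonempty with rfl | hs
    · simp
    · have hempty : {ω | a * #s ≤ ∑ i ∈ s, X i ω} = ∅ := by
        refine Set.eq_empty_of_forall_notMem fun ω hω => ?_
        have h := (show a * #s ≤ ∑ i ∈ s, X i ω from hω).trans
          (sum_le_card_nsmul s _ M fun i _ => hXM i ω)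
        rw [nsmul_eq_mul] at h
        nlinarith [show (0 : ℝ) < #s by exact_mod_cast hs.card_pos]
      rw [hempty, measureReal_empty]
      positivity

theorem measureReal_sum_ge_le_sum_add_min [IsFiniteMeasure P] {ι : Type*} (X : ι → Ω → ℝ)
    (s : Finset ι) (t M : ℝ) :
    P.real {ω | t ≤ ∑ i ∈ s, X i ω} ≤
      ∑ i ∈ s, P.real {ω | M ≤ X i ω} + P.real {ω | t ≤ ∑ i ∈ s, min (X i ω) M} := by
  have hsub : {ω | t ≤ ∑ i ∈ s, X i ω} ⊆
      (⋃ i ∈ s, {ω | M ≤ X i ω}) ∪ {ω | t ≤ ∑ i ∈ s, min (X i ω) M} := by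
    intro ω hω
    by_cases h : ∃ i ∈ s, M ≤ X i ω
    · obtain ⟨i, hi, hMi⟩ := h
      exact Or.inl (Set.mem_biUnion hi hMi)
    · push Not at h
      refine Or.inr ((show t ≤ ∑ i ∈ s, X i ω from hω).trans_eq (sum_congr rfl fun i hi => ?_))
      exact (min_eq_left (h i hi).le).symm
  calc P.real {ω | t ≤ ∑ i ∈ s, X i ω}
      ≤ P.real ((⋃ i ∈ s, {ω | M ≤ X i ω}) ∪ {ω | t ≤ ∑ i ∈ s, min (X i ω) M}) :=
        measureReal_mono hsub
    _ ≤ P.real (⋃ i ∈ s, {ω | M ≤ X i ω}) + P.real {ω | t ≤ ∑ i ∈ s, min (X i ω) M} :=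
        measureReal_union_le _ _
    _ ≤ _ := by grw [measureReal_biUnion_finset_le]

theorem measureReal_sum_ge_le_card_mul_add_exp [IsProbabilityMeasure P] {ι : Type*} {X : ι → Ω → ℝ}
    (hX : ∀ i, Measurable (X i)) (hind : iIndepFun X P) (hX0 : ∀ i ω, 0 ≤ X i ω)
    {s : Finset ι} {g : ℝ → ℝ} (hg : IntegrableOn g (Set.Ioi 0))
    (htail : ∀ i ∈ s, ∀ x > 0, P.real {ω | x ≤ X i ω} ≤ g x) {a M : ℝ} (ha : 0 ≤ a)
    (hga : 4 * ∫ x in Set.Ioi 0, g x ≤ a) (hM : 0 < M) :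
    P.real {ω | a * #s ≤ ∑ i ∈ s, X i ω} ≤
      #s * g M + exp (-(log 2 - 1 / 4) * (a ^ 2 * #s / M ^ 2)) := by
  have hY : ∀ i, Measurable fun ω => min (X i ω) M := fun i => (hX i).min measurable_const
  have hYind : iIndepFun (fun i ω => min (X i ω) M) P :=
    hind.comp (fun _ x => min x M) fun _ => measurable_id.min measurable_const
  have hmean : ∀ i ∈ s, ∫ ω, min (X i ω) M ∂P ≤ a / 4 := by
    intro i hi
    refine (integral_le_of_measureReal_gt_le ?_ (fun ω => le_min (hX0 i ω) hM.le) hg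
      fun x hx => (measureReal_mono fun ω hω => ?_).trans (htail i hi x hx)).trans (by linarith)
    · exact .of_mem_Icc 0 M (hY i).aemeasurable
        (.of_forall fun ω => ⟨le_min (hX0 i ω) hM.le, min_le_right _ _⟩)
    · exact ((show x < min (X i ω) M from hω).trans_le (min_le_left _ _)).le
  calc P.real {ω | a * #s ≤ ∑ i ∈ s, X i ω}
      ≤ ∑ i ∈ s, P.real {ω | M ≤ X i ω} + P.real {ω | a * #s ≤ ∑ i ∈ s, min (X i ω) M} :=
        measureReal_sum_ge_le_sum_add_min X s _ M
    _ ≤ ∑ _i ∈ s, g M + exp (-(log 2 - 1 / 4) * (a ^ 2 * #s / M ^ 2)) := by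
        gcongr with i hi
        · exact htail i hi M hM
        · exact measureReal_sum_ge_le_exp_neg_sq hY hYind hM ha (fun i ω => le_min (hX0 i ω) hM.le)
            (fun i ω => min_le_right _ _) hmean
    _ = #s * g M + exp (-(log 2 - 1 / 4) * (a ^ 2 * #s / M ^ 2)) := by
        rw [sum_const, nsmul_eq_mul]

end Probability

theorem stretched_exponential_concentration_general (c c₁ θ : ℝ) (hc : 0 < c) (hc₁ : 0 < c₁)
    (hθ0 : 0 < θ) :
    ∃ c₂ > (0 : ℝ), ∃ c₃ > (0 : ℝ),
      ∀ (Ω : Type) [MeasurableSpace Ω] (P : Measure Ω) [IsProbabilityMeasure P]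
        (F : Filtration ℕ ‹MeasurableSpace Ω›) (Φ : ℕ → Ω → ℝ),
        (∀ i ω, 0 ≤ Φ i ω) →
        Adapted F Φ →
        iIndepFun Φ P →
        (∀ i : ℕ, 1 ≤ i → ∀ x : ℝ, 0 ≤ x →
          ∀ᵐ ω ∂P,
            (P[Set.indicator {ω' | x ≤ Φ i ω'} (fun _ => (1 : ℝ)) | F (i - 1)]) ω ≤
              c * Real.exp (-c₁ * x ^ θ)) →
        ∀ a : ℝ, 4 * (∫ x in Set.Ioi (0 : ℝ), c * Real.exp (-c₁ * x ^ θ)) ≤ a →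
        ∀ n : ℕ, 1 ≤ n →
          P {ω | a * n ≤ ∑ i ∈ Finset.Icc 1 n, Φ i ω} ≤
            ENNReal.ofReal (c₂ * (1 + (n : ℝ) ^ ((1 : ℝ) / (2 + θ)) / a ^ (θ / (2 + θ))) *
              Real.exp (-c₃ * (a ^ 2 * (n : ℝ)) ^ (θ / (2 + θ)))) := by
  have hμ := integral_const_mul_exp_neg_mul_rpow_pos hc hc₁ hθ0
  set μ := ∫ x in Set.Ioi (0 : ℝ), c * exp (-c₁ * x ^ θ)
  set r := θ / (2 + θ)
  obtain ⟨K, hK, hnK⟩ :=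
    exists_le_mul_exp_mul_rpow (b := c₁ / 2 * (16 * μ ^ 2) ^ r) (r := r) (by positivity)
      (by positivity)
  refine ⟨1 + c * K, by positivity, min (log 2 - 1 / 4) (c₁ / 2),
    lt_min (by linarith [log_two_gt_d9]) (by positivity), ?_⟩
  intro Ω _ P _ F Φ hΦ0 hadp hind htail a ha n hn
  have hΦ : ∀ i, Measurable (Φ i) := fun i => (hadp i).mono (F.le i) le_rfl
  have ha0 : 0 < a := by linarith
  have hA : 0 < a ^ 2 * n := by positivity
  set M := (a ^ 2 * n) ^ (1 / (2 + θ))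
  have hMθ : M ^ θ = (a ^ 2 * n) ^ r := by rw [← rpow_mul hA.le, one_div_mul_eq_div]
  have key := measureReal_sum_ge_le_card_mul_add_exp hΦ hind hΦ0 (s := Icc 1 n)
    (integrableOn_const_mul_exp_neg_mul_rpow c hc₁ hθ0)
    (fun i hi x hx => measureReal_le_of_condExp_indicator_le (F.le _)
      (measurableSet_le measurable_const (hΦ i)) (htail i (mem_Icc.1 hi).1 x hx.le))
    (by linarith) ha (M := M) (by positivity)
  rw [Nat.card_Icc, add_tsub_cancel_right, hMθ,
    div_rpow_one_div_two_add_sq hA (by positivity)] at key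
  have hnT : (n : ℝ) ≤ K * exp (c₁ / 2 * (a ^ 2 * n) ^ r) := by
    refine (hnK n (by exact_mod_cast hn)).trans ?_
    rw [mul_assoc, ← mul_rpow (by positivity) (by positivity)]
    gcongr
    nlinarith
  rw [← ofReal_measureReal]
  refine ENNReal.ofReal_le_ofReal (key.trans
    ((mul_mul_exp_add_exp_le hc.le hK.le (by positivity) hnT).trans ?_))
  gcongr
  exact le_mul_of_one_le_right (by positivity) (le_add_of_nonneg_right (by positivity))

/-- Concentration for sums of independent random variables with conditionally
stretched-exponential tails: there are constants `c₂, c₃ > 0` depending only on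
`c, c₁, θ` such that for any filtration `F` and any independent, nonnegative,
adapted variables `Φ_i` with `P(Φ_i ≥ x | F_{i−1}) ≤ c e^{−c₁ x^θ}`, setting
`μ = ∫₀^∞ c e^{−c₁ x^θ} dx`, for every `a ≥ 4μ` and `n ≥ 1`,
`P(Σ_{i=1}^n Φ_i ≥ an) ≤ c₂ (1 + n^{1/(2+θ)}/a^{θ/(2+θ)}) e^{−c₃ (a²n)^{θ/(2+θ)}}`. -/
theorem stretched_exponential_concentration (c c₁ θ : ℝ) (hc : 0 < c) (hc₁ : 0 < c₁)
    (hθ0 : 0 < θ) (hθ1 : θ < 1) :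
    ∃ c₂ > (0 : ℝ), ∃ c₃ > (0 : ℝ),
      ∀ (Ω : Type) [MeasurableSpace Ω] (P : Measure Ω) [IsProbabilityMeasure P]
        (F : Filtration ℕ ‹MeasurableSpace Ω›) (Φ : ℕ → Ω → ℝ),
        (∀ i ω, 0 ≤ Φ i ω) →
        Adapted F Φ →
        iIndepFun Φ P →
        (∀ i : ℕ, 1 ≤ i → ∀ x : ℝ, 0 ≤ x →
          ∀ᵐ ω ∂P,
            (P[Set.indicator {ω' | x ≤ Φ i ω'} (fun _ => (1 : ℝ)) | F (i - 1)]) ω ≤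
              c * Real.exp (-c₁ * x ^ θ)) →
        ∀ a : ℝ, 4 * (∫ x in Set.Ioi (0 : ℝ), c * Real.exp (-c₁ * x ^ θ)) ≤ a →
        ∀ n : ℕ, 1 ≤ n →
          P {ω | a * n ≤ ∑ i ∈ Finset.Icc 1 n, Φ i ω} ≤
            ENNReal.ofReal (c₂ * (1 + (n : ℝ) ^ ((1 : ℝ) / (2 + θ)) / a ^ (θ / (2 + θ))) *
              Real.exp (-c₃ * (a ^ 2 * (n : ℝ)) ^ (θ / (2 + θ)))) :=
  stretched_exponential_concentration_general c c₁ θ hc hc₁ hθ0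
end
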